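/- Let G be a connected finite simple graph and π a sign function on G. Then ρ(G_π) ≤ ρ(G), with equality if and only if G_π is switching equivalent to G_+ (all signs +1) or to G_− (all signs −1). -/

import Mathlib

open Matrix Finset
open scoped Classical

noncomputable section

/-- `μ` is an eigenvalue of the real matrix `A`. -/
def IsEigenval {n : Type*} [Fintype n] (A : Matrix n n ℝ) (μ : ℝ) : Prop :=
  ∃ x : n → ℝ, x ≠ 0 ∧ A.mulVec x = μ • x

/-- The spectral radius of a real symmetric matrix:
the largest modulus of an eigenvalue. -/
def specRad {n : Type*} [Fintype n] (A : Matrix n n ℝ) : ℝ :=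
  sSup {r : ℝ | ∃ μ : ℝ, IsEigenval A μ ∧ r = |μ|}

/-- The spectral radius of a finite simple graph. -/
def grho {V : Type*} [Fintype V] [DecidableEq V] (G : SimpleGraph V) : ℝ :=
  letI := Classical.decRel G.Adj
  specRad (G.adjMatrix ℝ)

/-- max over edges of spectral radius of the edge-deleted graph -/
def rhoE {V : Type*} [Fintype V] [DecidableEq V] (G : SimpleGraph V) : ℝ :=
  sSup {r : ℝ | ∃ e ∈ G.edgeSet, r = grho (G.deleteEdges {e})}

/-- Eigenpair of the k-power hypergraph G^(k). -/
def IsPowerEigenpair {V : Type*} [Fintype V] [DecidableEq V] (G : SimpleGraph V) (k : ℕ)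
    (lam : ℂ) (x : (V ⊕ (G.edgeSet × Fin (k - 2))) → ℂ) : Prop :=
  x ≠ 0 ∧
    (∀ i : V, lam * x (Sum.inl i) ^ (k - 1) =
      ∑ j : V, if h : G.Adj i j then
        x (Sum.inl j) * ∏ t : Fin (k - 2), x (Sum.inr (⟨s(i, j), (G.mem_edgeSet).mpr h⟩, t))
      else 0) ∧
    ∀ (i j : V) (h : G.Adj i j) (t : Fin (k - 2)),
      lam * x (Sum.inr (⟨s(i, j), (G.mem_edgeSet).mpr h⟩, t)) ^ (k - 1) =
        x (Sum.inl i) * x (Sum.inl j) *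
          ∏ u ∈ Finset.univ.erase t, x (Sum.inr (⟨s(i, j), (G.mem_edgeSet).mpr h⟩, u))

/-- λ is an eigenvalue of G^(k). -/
def IsPowerEigenvalue {V : Type*} [Fintype V] [DecidableEq V] (G : SimpleGraph V) (k : ℕ)
    (lam : ℂ) : Prop :=
  ∃ x, IsPowerEigenpair G k lam x

/-- The adjacency matrix of a signed graph, sign function `π : G.edgeSet → ℤˣ`. -/
def signedAdj {V : Type*} [Fintype V] [DecidableEq V] (G : SimpleGraph V)
    (π : G.edgeSet → ℤˣ) : Matrix V V ℝ :=
  Matrix.of fun i j => if h : G.Adj i j then ((π ⟨s(i, j), (G.mem_edgeSet).mpr h⟩ : ℤ) : ℝ) else 0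

/-- Switching-equivalence of matrices. -/
def SwitchEquiv {V : Type*} [Fintype V] [DecidableEq V] (A B : Matrix V V ℝ) : Prop :=
  ∃ d : V → ℝ, (∀ i, d i = 1 ∨ d i = -1) ∧ B = Matrix.diagonal d * A * Matrix.diagonal d

/-- A signed graph is balanced if it is switching equivalent to the all-`+1` signing. -/
def IsBalanced {V : Type*} [Fintype V] [DecidableEq V] (G : SimpleGraph V)
    (π : G.edgeSet → ℤˣ) : Prop :=
  SwitchEquiv (signedAdj G π) (signedAdj G fun _ => 1)

def IsBipartite {V : Type*} (G : SimpleGraph V) : Prop :=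
  ∃ c : V → Bool, ∀ ⦃i j⦄, G.Adj i j → c i ≠ c j

end


/-! If `A(G_π) x = μ x` with `|μ| = ρ(G_π)`, then `|μ| |x| = |A(G_π) x| ≤ A(G) |x|` entrywise, and
the Rayleigh bound for the symmetric matrix `A(G)` gives `ρ(G_π) ≤ ρ(G)`. When equality holds the
Rayleigh bound is attained, so `|x|` is an eigenvector of `A(G)` for `ρ(G)`, and it has no zero
entry because `G` is connected. Switching by the signs `D` of `x` turns `x` into `|x|`; then
`sign(μ) D A(G_π) D` and `A(G)` are two matrices with entries bounded in modulus by `A(G)` that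
agree on the positive vector `|x|`, so they coincide. Conversely, switching and negation preserve
the spectrum. -/

section Spectrum

variable {n : Type*} [Fintype n] [DecidableEq n] {A B : Matrix n n ℝ} {x : n → ℝ} {μ : ℝ}

theorem isEigenval_iff_mem_spectrum : IsEigenval A μ ↔ μ ∈ spectrum ℝ A := by
  rw [← spectrum_toLin', ← Module.End.hasEigenvalue_iff_mem_spectrum,
    Module.End.hasEigenvalue_iff, Submodule.ne_bot_iff]
  simp [IsEigenval, and_comm]

theorem specRad_eq_sSup_abs_image_spectrum (A : Matrix n n ℝ) :
    specRad A = sSup ((|·|) '' spectrum ℝ A) := by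
  simp [specRad, isEigenval_iff_mem_spectrum, eq_comm, Set.image]

theorem abs_le_specRad_of_mem_spectrum (hμ : μ ∈ spectrum ℝ A) : |μ| ≤ specRad A := by
  rw [specRad_eq_sSup_abs_image_spectrum]
  exact le_csSup (finite_real_spectrum.image _).bddAbove (Set.mem_image_of_mem _ hμ)

theorem specRad_nonneg (A : Matrix n n ℝ) : 0 ≤ specRad A := by
  rw [specRad_eq_sSup_abs_image_spectrum]
  exact Real.sSup_nonneg fun _ ⟨μ, _, hμ⟩ => hμ ▸ abs_nonneg μ

theorem specRad_neg (A : Matrix n n ℝ) : specRad (-A) = specRad A := by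
  simp_rw [specRad_eq_sSup_abs_image_spectrum, ← spectrum.neg_eq]
  congr 1
  ext r
  simp

theorem specRad_diagonal_mul_mul_diagonal {d : n → ℝ} (hd : ∀ i, d i = 1 ∨ d i = -1)
    (A : Matrix n n ℝ) : specRad (diagonal d * A * diagonal d) = specRad A := by
  have hdd : diagonal d * diagonal d = 1 := by
    rw [diagonal_mul_diagonal, ← diagonal_one]
    congr 1; funext i; rcases hd i with h | h <;> simp [h]
  let D : (Matrix n n ℝ)ˣ := ⟨diagonal d, diagonal d, hdd, hdd⟩
  rw [show diagonal d * A * diagonal d = (D : Matrix n n ℝ) * A * ↑D⁻¹ from rfl,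
    specRad_eq_sSup_abs_image_spectrum, spectrum.units_conjugate,
    specRad_eq_sSup_abs_image_spectrum]

theorem Matrix.IsHermitian.exists_isEigenval_abs_eq_specRad [Nonempty n] (hA : A.IsHermitian) :
    ∃ μ, IsEigenval A μ ∧ |μ| = specRad A := by
  have hne : ((|·|) '' spectrum ℝ A).Nonempty := by
    simp [hA.spectrum_real_eq_range_eigenvalues, Set.range_nonempty]
  obtain ⟨μ, hμ, hμρ⟩ := hne.csSup_mem (finite_real_spectrum.image _)
  exact ⟨μ, isEigenval_iff_mem_spectrum.mpr hμ,
    hμρ.trans (specRad_eq_sSup_abs_image_spectrum A).symm⟩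

theorem Matrix.IsHermitian.posSemidef_specRad_smul_one_sub (hA : A.IsHermitian) :
    (specRad A • 1 - A).PosSemidef := by
  refine posSemidef_iff_isHermitian_and_spectrum_nonneg.mpr
    ⟨(isHermitian_one.smul (.all _)).sub hA, ?_⟩
  rw [← Algebra.algebraMap_eq_smul_one, ← spectrum.singleton_sub_eq]
  rintro _ ⟨_, rfl, μ, hμ, rfl⟩
  simpa using (le_abs_self μ).trans (abs_le_specRad_of_mem_spectrum hμ)

theorem Matrix.IsHermitian.dotProduct_mulVec_le_specRad_mul (hA : A.IsHermitian) (x : n → ℝ) :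
    x ⬝ᵥ A *ᵥ x ≤ specRad A * (x ⬝ᵥ x) := by
  have := hA.posSemidef_specRad_smul_one_sub.dotProduct_mulVec_nonneg x
  simp [sub_mulVec, dotProduct_sub, smul_mulVec] at this
  linarith

theorem Matrix.IsHermitian.mulVec_eq_specRad_smul_of_le (hA : A.IsHermitian)
    (h : specRad A * (x ⬝ᵥ x) ≤ x ⬝ᵥ A *ᵥ x) : A *ᵥ x = specRad A • x := by
  have := (hA.posSemidef_specRad_smul_one_sub.dotProduct_mulVec_zero_iff x).mp (by
    simp [sub_mulVec, dotProduct_sub, smul_mulVec]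
    linarith [hA.dotProduct_mulVec_le_specRad_mul x])
  rw [sub_mulVec, smul_mulVec, one_mulVec, sub_eq_zero] at this
  exact this.symm

theorem Matrix.IsHermitian.le_specRad_of_smul_le_mulVec (hB : B.IsHermitian) {c : ℝ}
    (hx : 0 ≤ x) (hx0 : x ≠ 0) (h : c • x ≤ B *ᵥ x) : c ≤ specRad B := by
  have hxx : 0 < x ⬝ᵥ x := (dotProduct_nonneg_of_nonneg hx hx).lt_of_ne'
    (dotProduct_self_eq_zero.not.mpr hx0)
  refine le_of_mul_le_mul_right ?_ hxx
  calc c * (x ⬝ᵥ x) = x ⬝ᵥ c • x := by rw [dotProduct_smul, smul_eq_mul]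
    _ ≤ x ⬝ᵥ B *ᵥ x := dotProduct_le_dotProduct_of_nonneg_left h hx
    _ ≤ specRad B * (x ⬝ᵥ x) := hB.dotProduct_mulVec_le_specRad_mul x

theorem Matrix.IsHermitian.mulVec_eq_of_specRad_smul_le (hB : B.IsHermitian) (hx : 0 ≤ x)
    (h : specRad B • x ≤ B *ᵥ x) : B *ᵥ x = specRad B • x :=
  hB.mulVec_eq_specRad_smul_of_le (by
    simpa [dotProduct_smul] using dotProduct_le_dotProduct_of_nonneg_left h hx)

end Spectrum

section Comparison

variable {n : Type*} [Fintype n] {A B : Matrix n n ℝ} {x : n → ℝ} {μ : ℝ}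

theorem abs_mulVec_le_mulVec_abs (h : ∀ i j, |A i j| ≤ B i j) (x : n → ℝ) :
    |A *ᵥ x| ≤ B *ᵥ |x| := fun i =>
  calc |∑ j, A i j * x j| ≤ ∑ j, |A i j * x j| := abs_sum_le_sum_abs _ _
    _ ≤ ∑ j, B i j * |x j| := sum_le_sum fun j _ => by
        rw [abs_mul]; exact mul_le_mul_of_nonneg_right (h i j) (abs_nonneg _)

theorem abs_smul_abs_le_mulVec_abs (h : ∀ i j, |A i j| ≤ B i j) (hx : A *ᵥ x = μ • x) :
    |μ| • |x| ≤ B *ᵥ |x| := fun i => by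
  simpa [hx, abs_mul] using abs_mulVec_le_mulVec_abs h x i

theorem eq_of_abs_le_of_mulVec_eq (h : ∀ i j, |A i j| ≤ B i j) {z : n → ℝ}
    (hz : ∀ i, 0 < z i) (hAB : A *ᵥ z = B *ᵥ z) : A = B := by
  ext i j
  have hsum : ∑ k, (B i k - A i k) * z k = 0 := by
    simpa [mulVec, dotProduct, sub_mul, sum_sub_distrib, sub_eq_zero] using (congrFun hAB i).symm
  have hterm := (sum_eq_zero_iff_of_nonneg fun k _ => mul_nonneg
    (sub_nonneg.mpr ((le_abs_self _).trans (h i k))) (hz k).le).mp hsum j (mem_univ j)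
  linarith [(mul_eq_zero.mp hterm).resolve_right (hz j).ne']

variable [DecidableEq n]

theorem IsEigenval.abs_le_specRad_of_abs_le (hB : B.IsHermitian) (h : ∀ i j, |A i j| ≤ B i j)
    (hμ : IsEigenval A μ) : |μ| ≤ specRad B := by
  obtain ⟨x, hx0, hx⟩ := hμ
  exact hB.le_specRad_of_smul_le_mulVec (abs_nonneg x) (by simpa using hx0)
    (abs_smul_abs_le_mulVec_abs h hx)

theorem specRad_le_of_abs_le (hB : B.IsHermitian) (h : ∀ i j, |A i j| ≤ B i j) :
    specRad A ≤ specRad B :=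
  Real.sSup_le (fun _ ⟨_, hμ, hr⟩ => hr ▸ hμ.abs_le_specRad_of_abs_le hB h) (specRad_nonneg B)

end Comparison

section Switching

/-- Unlike `SignType.sign`, this is never `0`. -/
noncomputable def pmSign (a : ℝ) : ℝ := if 0 ≤ a then 1 else -1

theorem pmSign_eq_one_or (a : ℝ) : pmSign a = 1 ∨ pmSign a = -1 := by
  unfold pmSign; split_ifs <;> simp

theorem abs_pmSign (a : ℝ) : |pmSign a| = 1 := by
  rcases pmSign_eq_one_or a with h | h <;> simp [h]

theorem pmSign_mul_self (a : ℝ) : pmSign a * a = |a| := by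
  unfold pmSign
  split_ifs with h
  · simp [abs_of_nonneg h]
  · simp [abs_of_neg (not_le.mp h)]

theorem pmSign_mul_abs (a : ℝ) : pmSign a * |a| = a := by
  rw [← pmSign_mul_self, ← mul_assoc]
  rcases pmSign_eq_one_or a with h | h <;> simp [h]

variable {n : Type*} [Fintype n] [DecidableEq n] {A B : Matrix n n ℝ} {x : n → ℝ} {μ : ℝ}

theorem pmSign_smul_diagonal_mul_mul_diagonal_eq (h : ∀ i j, |A i j| = B i j)
    (hx : A *ᵥ x = μ • x) (hB : B *ᵥ |x| = |μ| • |x|) (hx0 : ∀ i, x i ≠ 0) :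
    pmSign μ • (diagonal (pmSign ∘ x) * A * diagonal (pmSign ∘ x)) = B := by
  set D := diagonal (pmSign ∘ x)
  have hDx : D *ᵥ x = |x| := funext fun i => by simp [D, mulVec_diagonal, pmSign_mul_self]
  have hDabs : D *ᵥ |x| = x := funext fun i => by simp [D, mulVec_diagonal, pmSign_mul_abs]
  refine eq_of_abs_le_of_mulVec_eq (fun i j => ?_) (fun i => abs_pos.mpr (hx0 i)) ?_
  · simp [D, diagonal_mul, mul_diagonal, abs_mul, abs_pmSign, h]
  · calc (pmSign μ • (D * A * D)) *ᵥ |x| = pmSign μ • (D *ᵥ A *ᵥ D *ᵥ |x|) := by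
          simp only [smul_mulVec, mulVec_mulVec, Matrix.mul_assoc]
      _ = pmSign μ • (D *ᵥ A *ᵥ x) := by rw [hDabs]
      _ = (pmSign μ * μ) • (D *ᵥ x) := by rw [hx, mulVec_smul, smul_smul]
      _ = B *ᵥ |x| := by rw [pmSign_mul_self, hDx, hB]

end Switching

theorem SimpleGraph.Connected.pos_of_adjMatrix_mulVec_eq_smul {V : Type*} [Fintype V]
    {G : SimpleGraph V} (hG : G.Connected) {z : V → ℝ} {c : ℝ} (hz : 0 ≤ z) (hz0 : z ≠ 0)
    (h : G.adjMatrix ℝ *ᵥ z = c • z) (i : V) : 0 < z i := by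
  have hadj {u v : V} (huv : G.Adj u v) (hu : z u = 0) : z v = 0 := by
    have hsum : ∑ w ∈ G.neighborFinset u, z w = 0 := by
      rw [← SimpleGraph.adjMatrix_mulVec_apply, h]; simp [hu]
    exact (sum_eq_zero_iff_of_nonneg fun w _ => hz w).mp hsum v (by simpa using huv)
  have hwalk {u v : V} (p : G.Walk u v) (hv : z v = 0) : z u = 0 := by
    induction p with
    | nil => exact hv
    | cons huw _ ih => exact hadj huw.symm (ih hv)
  obtain ⟨j, hj⟩ := Function.ne_iff.mp hz0
  obtain ⟨p⟩ := hG.preconnected j i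
  exact (hz i).lt_of_ne' fun hi => hj (hwalk p hi)

section SignedGraph

variable {V : Type*} [Fintype V] [DecidableEq V] (G : SimpleGraph V)

theorem abs_signedAdj_apply (π : G.edgeSet → ℤˣ) (i j : V) :
    |signedAdj G π i j| = G.adjMatrix ℝ i j := by
  by_cases h : G.Adj i j
  · rcases Int.units_eq_one_or (π ⟨s(i, j), G.mem_edgeSet.mpr h⟩) with hπ | hπ <;>
      simp [signedAdj, h, hπ]
  · simp [signedAdj, h]

theorem signedAdj_const (u : ℤˣ) :
    signedAdj G (fun _ => u) = ((u : ℤ) : ℝ) • G.adjMatrix ℝ := by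
  ext i j
  by_cases h : G.Adj i j <;> simp [signedAdj, h]

theorem isHermitian_signedAdj (π : G.edgeSet → ℤˣ) : (signedAdj G π).IsHermitian := by
  refine IsHermitian.ext fun i j => ?_
  by_cases h : G.Adj i j
  · have hswap : (⟨s(j, i), G.mem_edgeSet.mpr h.symm⟩ : G.edgeSet) =
        ⟨s(i, j), G.mem_edgeSet.mpr h⟩ := Subtype.ext Sym2.eq_swap
    simp [signedAdj, h, h.symm, hswap]
  · have h' : ¬G.Adj j i := fun h' => h h'.symm
    simp [signedAdj, h, h']

theorem grho_eq_specRad_adjMatrix : grho G = specRad (G.adjMatrix ℝ) := by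
  unfold grho
  congr

end SignedGraph

/-- For a connected graph `G` and any signing `π`, `ρ(G_π) ≤ ρ(G)`, with
equality iff `G_π` is switching equivalent to the all-`+1` or the all-`−1` signing. -/
theorem specRad_signed_le_and_eq_iff
    {V : Type*} [Fintype V] [DecidableEq V] (G : SimpleGraph V)
    (hG : G.Connected) (π : G.edgeSet → ℤˣ) :
    specRad (signedAdj G π) ≤ grho G ∧
      (specRad (signedAdj G π) = grho G ↔
        SwitchEquiv (signedAdj G π) (signedAdj G fun _ => 1) ∨
        SwitchEquiv (signedAdj G π) (signedAdj G fun _ => -1)) := by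
  have habs := abs_signedAdj_apply G π
  have hN : (G.adjMatrix ℝ).IsHermitian := SimpleGraph.isHermitian_adjMatrix (R := ℝ) G
  rw [grho_eq_specRad_adjMatrix, signedAdj_const, signedAdj_const]
  refine ⟨specRad_le_of_abs_le hN fun i j => (habs i j).le, fun heq => ?_, ?_⟩
  · have : Nonempty V := hG.nonempty
    obtain ⟨μ, ⟨x, hx0, hx⟩, hμ⟩ := (isHermitian_signedAdj G π).exists_isEigenval_abs_eq_specRad
    rw [heq] at hμ
    have hNx : G.adjMatrix ℝ *ᵥ |x| = |μ| • |x| := hμ ▸ hN.mulVec_eq_of_specRad_smul_le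
      (abs_nonneg x) (hμ ▸ abs_smul_abs_le_mulVec_abs (fun i j => (habs i j).le) hx)
    have hxpos := hG.pos_of_adjMatrix_mulVec_eq_smul (abs_nonneg x) (by simpa using hx0) hNx
    have hswitch := pmSign_smul_diagonal_mul_mul_diagonal_eq habs hx hNx
      fun i => abs_pos.mp (hxpos i)
    rcases pmSign_eq_one_or μ with hsgn | hsgn <;> rw [hsgn] at hswitch
    · exact .inl ⟨pmSign ∘ x, fun i => pmSign_eq_one_or _, by rw [← hswitch]; simp⟩
    · exact .inr ⟨pmSign ∘ x, fun i => pmSign_eq_one_or _, by rw [← hswitch]; simp⟩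
  · rintro (⟨d, hd, h⟩ | ⟨d, hd, h⟩) <;>
      rw [← specRad_diagonal_mul_mul_diagonal hd (signedAdj G π), ← h] <;> simp [specRad_neg]
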